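/- arXiv:1503.00987 — 2 statements merged into one kernel-verified Lean document; each statement's English description precedes it below -/
import Mathlib

section
/- Let $G(u,v,w)\in\mathbb{R}[[u,v,w]]$ be a formal power series in three variables such that $G(x, xy, xe^y) = 0$ as a formal identity (i.e., substituting $u=x$, $v=xy$, $w=x e^y$ where $e^y$ is the formal exponential series, yields the zero series in $\mathbb{R}[[x,y]]$). Then $G = 0$. -/
open Filter Topology Finset Polynomial

-- A real polynomial whose evaluations tend to 0 at +infinity is zero.
lemma poly_zero_of_tendsto {p : Polynomial ℝ}
    (h : Tendsto (fun y => p.eval y) atTop (nhds 0)) : p = 0 := by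
  rcases le_or_gt p.degree 0 with hdeg | hdeg
  · have hp := Polynomial.eq_C_of_degree_le_zero hdeg
    have : Tendsto (fun _ : ℝ => p.coeff 0) atTop (nhds 0) := by
      convert h using 2 with y
      rw [hp]; simp
    have h0 : p.coeff 0 = 0 := tendsto_nhds_unique tendsto_const_nhds this
    rw [hp, h0, map_zero]
  · exfalso
    have habs : Tendsto (fun y => |p.eval y|) atTop (nhds 0) := by
      simpa using h.abs
    exact not_tendsto_nhds_of_tendsto_atTop (Polynomial.abs_tendsto_atTop p hdeg) 0 habs

-- polynomial * decaying exponential tends to 0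
lemma poly_mul_exp_tendsto (p : Polynomial ℝ) {c : ℝ} (hc : 0 < c) :
    Tendsto (fun y : ℝ => p.eval y * Real.exp (-(c * y))) atTop (nhds 0) := by
  have h1 := (p.comp (Polynomial.C c⁻¹ * Polynomial.X)).tendsto_div_exp_atTop
  have h2 : Tendsto (fun y : ℝ => c * y) atTop atTop :=
    Tendsto.const_mul_atTop hc tendsto_id
  have := h1.comp h2
  convert this using 2 with y
  simp only [Function.comp_apply, Polynomial.eval_comp, Polynomial.eval_mul,
    Polynomial.eval_C, Polynomial.eval_X]
  rw [← mul_assoc, inv_mul_cancel₀ hc.ne', one_mul, Real.exp_neg, div_eq_mul_inv]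

lemma expPoly (K : ℕ) : ∀ (p : ℕ → Polynomial ℝ),
    (∀ y : ℝ, ∑ k ∈ range (K + 1), (p k).eval y * Real.exp (k * y) = 0) →
    ∀ k ≤ K, p k = 0 := by
  induction K with
  | zero =>
    intro p h k hk
    interval_cases k
    apply Polynomial.funext
    intro y
    have := h y
    simpa using this
  | succ K ih =>
    intro p h k hk
    have htop : p (K + 1) = 0 := by
      apply poly_zero_of_tendsto
      have key : ∀ y : ℝ, (p (K + 1)).eval y
          = -∑ k ∈ range (K + 1), (p k).eval y * Real.exp (-(((K : ℝ) + 1 - k) * y)) := by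
        intro y
        have h0 := h y
        rw [Finset.sum_range_succ] at h0
        have h1 : (p (K + 1)).eval y * Real.exp (((K : ℝ) + 1) * y)
            = -∑ k ∈ range (K + 1), (p k).eval y * Real.exp (k * y) := by
          push_cast at h0 ⊢
          linarith [h0]
        have h2 := congrArg (· * Real.exp (-(((K : ℝ) + 1) * y))) h1
        simp only [neg_mul, Finset.sum_mul] at h2
        rw [mul_assoc, ← Real.exp_add] at h2
        simp only [add_neg_cancel, Real.exp_zero, mul_one] at h2
        rw [h2]
        congr 1
        apply Finset.sum_congr rfl
        intro k _
        rw [mul_assoc, ← Real.exp_add]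
        ring_nf
      rw [funext key]
      have : Tendsto (fun y : ℝ => ∑ k ∈ range (K + 1),
          (p k).eval y * Real.exp (-(((K : ℝ) + 1 - k) * y))) atTop (nhds 0) := by
        have := tendsto_finset_sum (range (K + 1))
          (fun k hk => poly_mul_exp_tendsto (p k) (c := (K : ℝ) + 1 - k)
            (by
              have : (k : ℝ) ≤ K := by exact_mod_cast Finset.mem_range_succ_iff.mp hk
              linarith))
        simpa using this
      simpa using this.neg
    rcases eq_or_lt_of_le hk with heq | hlt
    · rw [heq]; exact htop
    · refine ih p ?_ k (Nat.lt_succ_iff.mp hlt)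
      intro y
      have h0 := h y
      rw [Finset.sum_range_succ, htop] at h0
      simpa using h0

lemma term_hasSum (j k : ℕ) (y : ℝ) :
    HasSum (fun b : ℕ => (if j ≤ b then (k : ℝ) ^ (b - j) / (Nat.factorial (b - j) : ℝ) else 0) * y ^ b)
      (y ^ j * Real.exp (k * y)) := by
  have h1 : HasSum (fun m : ℕ => ((k : ℝ) * y) ^ m / (Nat.factorial m : ℝ)) (Real.exp ((k : ℝ) * y)) := by
    rw [Real.exp_eq_exp_ℝ]
    exact NormedSpace.expSeries_div_hasSum_exp _
  have h2 := h1.mul_left (y ^ j)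
  have hinj : Function.Injective (fun m : ℕ => m + j) := add_left_injective j
  have hzero : ∀ b ∉ Set.range (fun m : ℕ => m + j),
      (if j ≤ b then (k : ℝ) ^ (b - j) / (Nat.factorial (b - j) : ℝ) else 0) * y ^ b = 0 := by
    intro b hb
    have : ¬ j ≤ b := by
      intro hle
      exact hb ⟨b - j, Nat.sub_add_cancel hle⟩
    rw [if_neg this, zero_mul]
  rw [← Function.Injective.hasSum_iff hinj hzero]
  convert h2 using 1
  · rfl
  funext m
  simp only [Function.comp_apply, Nat.add_sub_cancel, if_pos (Nat.le_add_left j m),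
    mul_pow, pow_add]
  ring

lemma coeffs_zero (N : ℕ) (c : ℕ → ℕ → ℝ)
    (h : ∀ y : ℝ, ∑ k ∈ range (N + 1), ∑ j ∈ range (N + 1),
      c j k * y ^ j * Real.exp (k * y) = 0) :
    ∀ j k, j ≤ N → k ≤ N → c j k = 0 := by
  set p : ℕ → Polynomial ℝ := fun k => ∑ j ∈ range (N + 1), Polynomial.C (c j k) * Polynomial.X ^ j with hp
  have hz : ∀ k ≤ N, p k = 0 := by
    apply expPoly N p
    intro y
    rw [← h y]
    apply Finset.sum_congr rfl
    intro k _
    rw [hp]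
    simp only [Polynomial.eval_finset_sum, Polynomial.eval_mul, Polynomial.eval_C,
      Polynomial.eval_pow, Polynomial.eval_X, Finset.sum_mul]
  intro j k hj hk
  have h1 := hz k hk
  have h2 : (p k).coeff j = c j k := by
    rw [hp]
    simp only [Polynomial.finset_sum_coeff, Polynomial.coeff_C_mul, Polynomial.coeff_X_pow,
      mul_ite, mul_one, mul_zero]
    rw [Finset.sum_ite_eq (range (N + 1)) j (fun j' => c j' k)]
    rw [if_pos (Finset.mem_range_succ_iff.mpr hj)]
  rw [← h2, h1, Polynomial.coeff_zero]

theorem stmt0 (G : MvPowerSeries (Fin 3) ℝ)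
    (hsubst : ∀ a b : ℕ,
      (∑ i ∈ Finset.range (a + 1), ∑ j ∈ Finset.range (a + 1),
        ∑ k ∈ Finset.range (a + 1),
          (if i + j + k = a ∧ j ≤ b then
            (MvPowerSeries.coeff
              (Finsupp.single (0 : Fin 3) i + Finsupp.single (1 : Fin 3) j
                + Finsupp.single (2 : Fin 3) k) G)
              * (k : ℝ) ^ (b - j) / (Nat.factorial (b - j) : ℝ)
          else 0)) = 0) :
    G = 0 := by
  have main : ∀ a : ℕ, ∀ j k : ℕ, j ≤ a → k ≤ a →
      (if j + k ≤ a then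
        MvPowerSeries.coeff
          (Finsupp.single (0 : Fin 3) (a - j - k) + Finsupp.single (1 : Fin 3) j
            + Finsupp.single (2 : Fin 3) k) G else 0) = 0 := by
    intro a
    set c : ℕ → ℕ → ℝ := fun j k =>
      if j + k ≤ a then
        MvPowerSeries.coeff
          (Finsupp.single (0 : Fin 3) (a - j - k) + Finsupp.single (1 : Fin 3) j
            + Finsupp.single (2 : Fin 3) k) G else 0 with hc
    show ∀ j k : ℕ, j ≤ a → k ≤ a → c j k = 0
    have stepA : ∀ b : ℕ, ∑ j ∈ range (a + 1), ∑ k ∈ range (a + 1),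
        c j k * (if j ≤ b then (k : ℝ) ^ (b - j) / (Nat.factorial (b - j) : ℝ) else 0) = 0 := by
      intro b
      have h0 := hsubst a b
      have e1 : (∑ i ∈ Finset.range (a + 1), ∑ j ∈ Finset.range (a + 1),
          ∑ k ∈ Finset.range (a + 1),
            (if i + j + k = a ∧ j ≤ b then
              (MvPowerSeries.coeff
                (Finsupp.single (0 : Fin 3) i + Finsupp.single (1 : Fin 3) j
                  + Finsupp.single (2 : Fin 3) k) G)
                * (k : ℝ) ^ (b - j) / (Nat.factorial (b - j) : ℝ)
            else 0))
          = ∑ j ∈ Finset.range (a + 1), ∑ k ∈ Finset.range (a + 1),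
            ∑ i ∈ Finset.range (a + 1),
            (if i + j + k = a ∧ j ≤ b then
              (MvPowerSeries.coeff
                (Finsupp.single (0 : Fin 3) i + Finsupp.single (1 : Fin 3) j
                  + Finsupp.single (2 : Fin 3) k) G)
                * (k : ℝ) ^ (b - j) / (Nat.factorial (b - j) : ℝ)
            else 0) :=
        Finset.sum_comm.trans (Finset.sum_congr rfl fun _ _ => Finset.sum_comm)
      rw [e1] at h0
      have e2 : ∑ j ∈ range (a + 1), ∑ k ∈ range (a + 1),
          c j k * (if j ≤ b then (k : ℝ) ^ (b - j) / (Nat.factorial (b - j) : ℝ) else 0)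
          = ∑ j ∈ Finset.range (a + 1), ∑ k ∈ Finset.range (a + 1),
            ∑ i ∈ Finset.range (a + 1),
            (if i + j + k = a ∧ j ≤ b then
              (MvPowerSeries.coeff
                (Finsupp.single (0 : Fin 3) i + Finsupp.single (1 : Fin 3) j
                  + Finsupp.single (2 : Fin 3) k) G)
                * (k : ℝ) ^ (b - j) / (Nat.factorial (b - j) : ℝ)
            else 0) := by
        apply Finset.sum_congr rfl
        intro j _
        apply Finset.sum_congr rfl
        intro k _
        by_cases hjk : j + k ≤ a
        · rw [eq_comm, Finset.sum_eq_single (a - j - k)]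
          · by_cases hjb : j ≤ b
            · rw [if_pos ⟨by omega, hjb⟩]
              simp only [hc, if_pos hjk, if_pos hjb]
              ring
            · rw [if_neg (fun h => hjb h.2)]
              simp only [if_neg hjb, mul_zero]
          · intro i _ hi
            exact if_neg (fun h => hi (by omega))
          · intro hnm
            exact absurd (Finset.mem_range_succ_iff.mpr (by omega)) hnm
        · rw [show c j k = 0 from if_neg hjk, zero_mul, eq_comm]
          exact Finset.sum_eq_zero (fun i _ => if_neg (fun h => hjk (by omega)))
      rw [e2, h0]
    have stepB : ∀ y : ℝ, ∑ j ∈ range (a + 1), ∑ k ∈ range (a + 1),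
        c j k * (y ^ j * Real.exp (k * y)) = 0 := by
      intro y
      have hs : HasSum (fun b : ℕ => ∑ j ∈ range (a + 1), ∑ k ∈ range (a + 1),
          c j k * ((if j ≤ b then (k : ℝ) ^ (b - j) / (Nat.factorial (b - j) : ℝ) else 0) * y ^ b))
          (∑ j ∈ range (a + 1), ∑ k ∈ range (a + 1), c j k * (y ^ j * Real.exp (k * y))) := by
        apply hasSum_sum
        intro j _
        apply hasSum_sum
        intro k _
        exact (term_hasSum j k y).mul_left (c j k)
      have h0 : (fun b : ℕ => ∑ j ∈ range (a + 1), ∑ k ∈ range (a + 1),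
          c j k * ((if j ≤ b then (k : ℝ) ^ (b - j) / (Nat.factorial (b - j) : ℝ) else 0) * y ^ b))
          = fun _ => (0 : ℝ) := by
        funext b
        calc ∑ j ∈ range (a + 1), ∑ k ∈ range (a + 1),
            c j k * ((if j ≤ b then (k : ℝ) ^ (b - j) / (Nat.factorial (b - j) : ℝ) else 0) * y ^ b)
            = (∑ j ∈ range (a + 1), ∑ k ∈ range (a + 1),
              c j k * (if j ≤ b then (k : ℝ) ^ (b - j) / (Nat.factorial (b - j) : ℝ) else 0)) * y ^ b := by
              rw [Finset.sum_mul]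
              refine Finset.sum_congr rfl fun j _ => ?_
              rw [Finset.sum_mul]
              refine Finset.sum_congr rfl fun k _ => ?_
              ring
          _ = 0 := by rw [stepA b, zero_mul]
      rw [h0] at hs
      exact hs.unique hasSum_zero
    intro j k hj hk
    apply coeffs_zero a c _ j k hj hk
    intro y
    rw [← stepB y, Finset.sum_comm]
    refine Finset.sum_congr rfl fun j' _ => Finset.sum_congr rfl fun k' _ => ?_
    ring
  ext m
  set i := m 0 with hi
  set j := m 1 with hj
  set k := m 2 with hk2
  have hm : m = Finsupp.single (0 : Fin 3) i + Finsupp.single (1 : Fin 3) j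
      + Finsupp.single (2 : Fin 3) k := by
    ext x
    fin_cases x <;> simp [hi, hj, hk2, Finsupp.single_apply]
  have hmain := main (i + j + k) j k (by omega) (by omega)
  rw [if_pos (by omega)] at hmain
  have hij : i + j + k - j - k = i := by omega
  rw [hij] at hmain
  simp only [map_zero]
  rw [hm]
  exact hmain
end

section
/- Let $X = \{(x,y,z) \in \mathbb{R}^3 : (x^2+y^2)xz - y^4 = 0\}$. For $\varepsilon = \pm 1$, the map $\varphi_\varepsilon : \{(s,t) \in \mathbb{R}^2 : t > 0\} \to \mathbb{R}^3$, $(s,t) \mapsto \varepsilon((s^2+t^2)s^2, (s^2+t^2)st, t^4)$, takes values in $X \cap \{\varepsilon z > 0\}$ and is injective, and every point of $X$ with $z \neq 0$ lies in the image of $\varphi_{+1}$ or $\varphi_{-1}$. -/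
/-- The parameterization `φ_ε(s,t) = ε((s²+t²)s², (s²+t²)st, t⁴)`. -/
def phiEps (ε : ℝ) (q : ℝ × ℝ) : ℝ × ℝ × ℝ :=
  (ε * ((q.1 ^ 2 + q.2 ^ 2) * q.1 ^ 2),
   ε * ((q.1 ^ 2 + q.2 ^ 2) * q.1 * q.2),
   ε * q.2 ^ 4)

/-!
STATEMENT 12: Let `X = {(x²+y²)xz - y⁴ = 0} ⊆ ℝ³`.  For `ε = ±1` the map `φ_ε`,
defined on `{t > 0}`, takes values in `X ∩ {εz > 0}`; every point of `X` with `z ≠ 0`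
lies in the image of `φ₊₁` or `φ₋₁`; and each `φ_ε` is injective on `{t > 0}`.
-/
theorem stmt12 :
    (∀ ε : ℝ, (ε = 1 ∨ ε = -1) → ∀ q : ℝ × ℝ, 0 < q.2 →
      ((phiEps ε q).1 ^ 2 + (phiEps ε q).2.1 ^ 2) * (phiEps ε q).1 * (phiEps ε q).2.2
          - (phiEps ε q).2.1 ^ 4 = 0 ∧
        0 < ε * (phiEps ε q).2.2) ∧
    (∀ p : ℝ × ℝ × ℝ, (p.1 ^ 2 + p.2.1 ^ 2) * p.1 * p.2.2 - p.2.1 ^ 4 = 0 →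
      p.2.2 ≠ 0 → ∃ ε : ℝ, (ε = 1 ∨ ε = -1) ∧ ∃ q : ℝ × ℝ, 0 < q.2 ∧ phiEps ε q = p) ∧
    (∀ ε : ℝ, (ε = 1 ∨ ε = -1) →
      Set.InjOn (phiEps ε) {q : ℝ × ℝ | 0 < q.2}) := by
  refine ⟨?_, ?_, ?_⟩
  · rintro ε (rfl | rfl) q hq <;> simp only [phiEps] <;>
      exact ⟨by ring, by nlinarith [pow_pos hq 4]⟩
  · rintro ⟨x, y, z⟩ heq hz
    simp only at heq hz
    set ε : ℝ := if 0 < z then 1 else -1 with hεdef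
    have hεz : 0 < ε * z := by
      by_cases h : 0 < z
      · simp [hεdef, h]
      · have : z < 0 := lt_of_le_of_ne (not_lt.mp h) hz
        simp only [hεdef, if_neg h]
        nlinarith
    have hε2 : ε ^ 2 = 1 := by
      by_cases h : 0 < z <;> simp [hεdef, h]
    have hεor : ε = 1 ∨ ε = -1 := by
      by_cases h : 0 < z <;> simp [hεdef, h]
    set t : ℝ := (ε * z) ^ ((1 : ℝ) / 4) with htdef
    have ht : 0 < t := Real.rpow_pos_of_pos hεz _
    have ht4 : t ^ 4 = ε * z := by
      rw [htdef, ← Real.rpow_natCast _ 4, ← Real.rpow_mul hεz.le]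
      norm_num
    by_cases hy : y = 0
    · -- then x = 0
      subst hy
      have hx : x = 0 := by
        have hx3 : x ^ 3 * z = 0 := by linear_combination heq
        rcases mul_eq_zero.mp hx3 with h | h
        · exact pow_eq_zero_iff (by norm_num) |>.mp h
        · exact absurd h hz
      subst hx
      refine ⟨ε, hεor, ⟨0, t⟩, ht, ?_⟩
      simp only [phiEps, Prod.mk.injEq]
      refine ⟨by ring, by ring, by linear_combination z * hε2 + ε * ht4⟩
    · refine ⟨ε, hεor, ⟨t * x / y, t⟩, ht, ?_⟩
      simp only [phiEps, Prod.mk.injEq]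
      refine ⟨?_, ?_, by linear_combination z * hε2 + ε * ht4⟩
      · field_simp
        linear_combination (ε * x ^ 2 * (x ^ 2 + y ^ 2)) * ht4 +
          (z * x ^ 2 * (x ^ 2 + y ^ 2)) * hε2 + x * heq
      · field_simp
        linear_combination (ε * x * (x ^ 2 + y ^ 2)) * ht4 +
          (z * x * (x ^ 2 + y ^ 2)) * hε2 + heq
  · intro ε hε
    have hεne : ε ≠ 0 := by rcases hε with rfl | rfl <;> norm_num
    rintro ⟨s, t⟩ ht ⟨s', t'⟩ ht' h
    simp only [Set.mem_setOf_eq] at ht ht'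
    simp only [phiEps, Prod.mk.injEq] at h
    obtain ⟨h1, h2, h3⟩ := h
    have h3' : t ^ 4 = t' ^ 4 := mul_left_cancel₀ hεne h3
    have htt : t = t' := by
      have hfac : (t - t') * (t^3 + t^2*t' + t*t'^2 + t'^3) = 0 := by
        linear_combination h3'
      have hpos : t^3 + t^2*t' + t*t'^2 + t'^3 > 0 := by positivity
      rcases mul_eq_zero.mp hfac with h | h
      · linarith
      · linarith
    subst htt
    have h1' : (s ^ 2 + t ^ 2) * s ^ 2 = (s' ^ 2 + t ^ 2) * s' ^ 2 :=
      mul_left_cancel₀ hεne h1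
    have h2' : (s ^ 2 + t ^ 2) * s * t = (s' ^ 2 + t ^ 2) * s' * t :=
      mul_left_cancel₀ hεne h2
    have hss2 : s ^ 2 = s' ^ 2 := by
      have hfac : (s ^ 2 - s' ^ 2) * (s ^ 2 + s' ^ 2 + t ^ 2) = 0 := by
        linear_combination h1'
      have hpos : s ^ 2 + s' ^ 2 + t ^ 2 > 0 := by positivity
      have := mul_eq_zero.mp hfac
      rcases this with h | h
      · linarith
      · linarith
    have hs : s = s' := by
      have hfac : (s - s') * ((s ^ 2 + t ^ 2) * t) = 0 := by
        linear_combination h2' - s' * t * hss2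
      have hpos : (s ^ 2 + t ^ 2) * t > 0 := by positivity
      rcases mul_eq_zero.mp hfac with h | h
      · linarith
      · linarith
    simp [hs]
end
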